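/- arXiv:2507.07848 — 2 statements merged into one kernel-verified Lean document; each statement's English description precedes it below -/
import Mathlib

section
/- Performance difference lemma: for any two stationary policies π and π' on a finite discounted MDP with starting distribution μ, J_μ^{π'} − J_μ^{π} = (1/(1-γ)) ∑_{s} d_μ^{π'}(s) ∑_{a} π'(a|s) A^{π}(s,a), where d_μ^{π'} is the γ-discounted state occupancy distribution of π' (normalized by (1-γ)). -/
/-- State distribution at time t under transition kernel `Ppi` from initial distribution `μ`. -/
noncomputable def stateDist {S : Type*} [Fintype S]
    (Ppi : S → S → ℝ) (μ : S → ℝ) : ℕ → S → ℝ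
  | 0 => μ
  | t + 1 => fun s' => ∑ s, stateDist Ppi μ t s * Ppi s s'

/-- γ-discounted (1-γ)-normalized state occupancy measure. -/
noncomputable def occupancy {S : Type*} [Fintype S]
    (Ppi : S → S → ℝ) (μ : S → ℝ) (γ : ℝ) (s : S) : ℝ :=
  (1 - γ) * ∑' t : ℕ, γ ^ t * stateDist Ppi μ t s

/-- Transition kernel over states induced by policy π. -/
noncomputable def inducedKernel {S A : Type*} [Fintype A]
    (P : S → A → S → ℝ) (π : S → A → ℝ) : S → S → ℝ :=
  fun s s' => ∑ a, π s a * P s a s'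

/-!
Let `K` be the kernel of `π'` and `g s = ∑ a, π' s a * Adv s a`. Subtracting the Bellman
equation of `V'` from the definition of `Adv` shows that `D = V' - V` solves the discounted
equation `D = g + γ K D`. Unrolling it `n` times along the state distributions `μ K^t` gives
`⟨μ, D⟩ = ∑_{t<n} γ^t ⟨μ K^t, g⟩ + γ^n ⟨μ K^n, D⟩`. Since `K` is substochastic, `μ K^n` stays
bounded in `ℓ¹`, so the remainder vanishes and the series is the occupancy pairing `⟨d_μ, g⟩`
up to the factor `1 - γ`.
-/

open Finset Filter Topology

section StateDist

variable {S : Type*} [Fintype S] {K : S → S → ℝ}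

theorem sum_stateDist_succ_mul (μ f : S → ℝ) (t : ℕ) :
    ∑ s', stateDist K μ (t + 1) s' * f s' =
      ∑ s, stateDist K μ t s * ∑ s', K s s' * f s' := by
  simp only [stateDist, sum_mul, mul_sum, mul_assoc]
  exact sum_comm

theorem sum_abs_stateDist_le (hK0 : ∀ s s', 0 ≤ K s s') (hK1 : ∀ s, ∑ s', K s s' ≤ 1)
    (μ : S → ℝ) (t : ℕ) : ∑ s, |stateDist K μ t s| ≤ ∑ s, |μ s| := by
  induction t with
  | zero => rfl
  | succ t ih =>
    calc ∑ s', |stateDist K μ (t + 1) s'|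
        ≤ ∑ s', ∑ s, |stateDist K μ t s| * K s s' := by
          refine sum_le_sum fun s' _ => (abs_sum_le_sum_abs _ _).trans_eq ?_
          simp only [abs_mul, abs_of_nonneg (hK0 _ _)]
      _ = ∑ s, |stateDist K μ t s| * ∑ s', K s s' := by
          rw [sum_comm]
          simp only [mul_sum]
      _ ≤ ∑ s, |stateDist K μ t s| :=
          sum_le_sum fun s _ => mul_le_of_le_one_right (abs_nonneg _) (hK1 s)
      _ ≤ ∑ s, |μ s| := ih

theorem summable_pow_mul_stateDist {γ : ℝ} (hγ0 : 0 ≤ γ) (hγ1 : γ < 1)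
    (hK0 : ∀ s s', 0 ≤ K s s') (hK1 : ∀ s, ∑ s', K s s' ≤ 1) (μ : S → ℝ) (s : S) :
    Summable fun t => γ ^ t * stateDist K μ t s := by
  refine .of_norm_bounded ((summable_geometric_of_lt_one hγ0 hγ1).mul_right (∑ s, |μ s|))
    fun t => ?_
  rw [norm_mul, norm_pow, Real.norm_of_nonneg hγ0, Real.norm_eq_abs]
  have hs := (single_le_sum (fun s _ => abs_nonneg (stateDist K μ t s)) (mem_univ s)).trans
    (sum_abs_stateDist_le hK0 hK1 μ t)
  exact mul_le_mul_of_nonneg_left hs (pow_nonneg hγ0 t)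

theorem summable_pow_mul_sum_stateDist_mul {γ : ℝ} (hγ0 : 0 ≤ γ) (hγ1 : γ < 1)
    (hK0 : ∀ s s', 0 ≤ K s s') (hK1 : ∀ s, ∑ s', K s s' ≤ 1) (μ f : S → ℝ) :
    Summable fun t => γ ^ t * ∑ s, stateDist K μ t s * f s := by
  simp only [mul_sum, ← mul_assoc]
  exact summable_sum fun s _ => (summable_pow_mul_stateDist hγ0 hγ1 hK0 hK1 μ s).mul_right _

theorem hasSum_pow_mul_sum_stateDist_mul_of_eq {γ : ℝ} (hγ0 : 0 ≤ γ) (hγ1 : γ < 1)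
    (hK0 : ∀ s s', 0 ≤ K s s') (hK1 : ∀ s, ∑ s', K s s' ≤ 1) {D g : S → ℝ}
    (hD : ∀ s, D s = g s + γ * ∑ s', K s s' * D s') (μ : S → ℝ) :
    HasSum (fun t => γ ^ t * ∑ s, stateDist K μ t s * g s) (∑ s, μ s * D s) := by
  set f := fun t => ∑ s, stateDist K μ t s * D s
  set G := fun t => ∑ s, stateDist K μ t s * g s
  have hf : ∀ t, f t = G t + γ * f (t + 1) := fun t => by
    calc f t = ∑ s, stateDist K μ t s * (g s + γ * ∑ s', K s s' * D s') :=
          sum_congr rfl fun s _ => by rw [← hD]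
      _ = G t + γ * ∑ s', stateDist K μ (t + 1) s' * D s' := by
          rw [sum_stateDist_succ_mul, mul_sum]
          simp only [G, mul_add, sum_add_distrib, mul_left_comm γ]
  have htelescope : ∀ n, ∑ t ∈ range n, γ ^ t * G t = f 0 - γ ^ n * f n := fun n => by
    induction n with
    | zero => simp
    | succ n ih => rw [sum_range_succ, ih, hf n]; ring
  have hremainder : Tendsto (fun n => γ ^ n * f n) atTop (𝓝 0) :=
    (summable_pow_mul_sum_stateDist_mul hγ0 hγ1 hK0 hK1 μ D).tendsto_atTop_zero
  have hpartial : Tendsto (fun n => ∑ t ∈ range n, γ ^ t * G t) atTop (𝓝 (f 0)) := by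
    simp only [htelescope]
    simpa using tendsto_const_nhds.sub hremainder
  exact (summable_pow_mul_sum_stateDist_mul hγ0 hγ1 hK0 hK1 μ g).hasSum_iff_tendsto_nat.mpr
    hpartial

theorem sum_occupancy_mul {γ : ℝ} (hγ0 : 0 ≤ γ) (hγ1 : γ < 1)
    (hK0 : ∀ s s', 0 ≤ K s s') (hK1 : ∀ s, ∑ s', K s s' ≤ 1) (μ g : S → ℝ) :
    ∑ s, occupancy K μ γ s * g s =
      (1 - γ) * ∑' t, γ ^ t * ∑ s, stateDist K μ t s * g s := by
  simp only [occupancy, mul_assoc, ← tsum_mul_right, ← mul_sum]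
  rw [← Summable.tsum_finsetSum fun s _ => by
    simpa only [mul_assoc] using (summable_pow_mul_stateDist hγ0 hγ1 hK0 hK1 μ s).mul_right (g s)]
  simp only [mul_sum]

end StateDist

section MDP

variable {S A : Type*} [Fintype A] {P : S → A → S → ℝ} {π : S → A → ℝ}

theorem inducedKernel_nonneg (hP0 : ∀ s a s', 0 ≤ P s a s') (hπ0 : ∀ s a, 0 ≤ π s a)
    (s s' : S) : 0 ≤ inducedKernel P π s s' :=
  sum_nonneg fun a _ => mul_nonneg (hπ0 s a) (hP0 s a s')

variable [Fintype S]

theorem sum_inducedKernel_eq_one (hP1 : ∀ s a, ∑ s', P s a s' = 1) (hπ1 : ∀ s, ∑ a, π s a = 1)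
    (s : S) : ∑ s', inducedKernel P π s s' = 1 := by
  simp only [inducedKernel]
  rw [sum_comm]
  simp only [← mul_sum, hP1, mul_one, hπ1]

theorem sub_eq_sum_mul_advantage_add (hπ1 : ∀ s, ∑ a, π s a = 1) {R : S → A → ℝ} {γ : ℝ}
    {V V' : S → ℝ} (hV' : ∀ s, V' s = ∑ a, π s a * (R s a + γ * ∑ s', P s a s' * V' s'))
    (s : S) :
    V' s - V s = ∑ a, π s a * (R s a + γ * ∑ s', P s a s' * V s' - V s) +
      γ * ∑ s', inducedKernel P π s s' * (V' s' - V s') := by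
  have hkernel : γ * ∑ s', inducedKernel P π s s' * (V' s' - V s') =
      ∑ a, π s a * (γ * ∑ s', P s a s' * (V' s' - V s')) := by
    simp only [inducedKernel, sum_mul, mul_sum]
    rw [sum_comm]
    exact sum_congr rfl fun a _ => sum_congr rfl fun s' _ => by ring
  calc V' s - V s = ∑ a, π s a * (R s a + γ * ∑ s', P s a s' * V' s') - ∑ a, π s a * V s := by
        rw [← sum_mul, hπ1, one_mul, ← hV' s]
    _ = _ := by
        rw [hkernel, ← sum_sub_distrib, ← sum_add_distrib]
        refine sum_congr rfl fun a _ => ?_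
        simp only [mul_sub, sum_sub_distrib]
        ring

end MDP

theorem performance_difference_lemma_general
    {S A : Type*} [Fintype S] [Fintype A]
    (P : S → A → S → ℝ) (R : S → A → ℝ) (γ : ℝ)
    (hγ0 : 0 ≤ γ) (hγ1 : γ < 1)
    (hP0 : ∀ s a s', 0 ≤ P s a s') (hP1 : ∀ s a, ∑ s', P s a s' = 1)
    (π' : S → A → ℝ)
    (hπ'0 : ∀ s a, 0 ≤ π' s a) (hπ'1 : ∀ s, ∑ a, π' s a = 1)
    (μ : S → ℝ)
    (V V' : S → ℝ)
    (hV' : ∀ s, V' s = ∑ a, π' s a * (R s a + γ * ∑ s', P s a s' * V' s'))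
    (Q : S → A → ℝ) (hQ : ∀ s a, Q s a = R s a + γ * ∑ s', P s a s' * V s')
    (Adv : S → A → ℝ) (hAdv : ∀ s a, Adv s a = Q s a - V s) :
    (∑ s, μ s * V' s) - (∑ s, μ s * V s) =
      (1 / (1 - γ)) *
        ∑ s, occupancy (inducedKernel P π') μ γ s * ∑ a, π' s a * Adv s a := by
  have hK0 := inducedKernel_nonneg hP0 hπ'0
  have hK1 s := (sum_inducedKernel_eq_one hP1 hπ'1 s).le
  have hAdv' s a : Adv s a = R s a + γ * ∑ s', P s a s' * V s' - V s := by rw [hAdv, hQ]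
  have hseries := hasSum_pow_mul_sum_stateDist_mul_of_eq hγ0 hγ1 hK0 hK1
    (g := fun s => ∑ a, π' s a * Adv s a)
    (fun s => by simpa only [hAdv'] using sub_eq_sum_mul_advantage_add (V := V) hπ'1 hV' s) μ
  beta_reduce at hseries
  rw [sum_occupancy_mul hγ0 hγ1 hK0 hK1, hseries.tsum_eq, ← mul_assoc,
    one_div_mul_cancel (by linarith), one_mul, ← sum_sub_distrib]
  simp only [mul_sub]

/-- Performance difference lemma:
J_μ^{π'} − J_μ^{π} = (1/(1-γ)) ∑_s d_μ^{π'}(s) ∑_a π'(a|s) A^{π}(s,a). -/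
theorem performance_difference_lemma
    {S A : Type*} [Fintype S] [Fintype A]
    (P : S → A → S → ℝ) (R : S → A → ℝ) (γ : ℝ)
    (hγ0 : 0 ≤ γ) (hγ1 : γ < 1)
    (hP0 : ∀ s a s', 0 ≤ P s a s') (hP1 : ∀ s a, ∑ s', P s a s' = 1)
    (π π' : S → A → ℝ)
    (hπ0 : ∀ s a, 0 ≤ π s a) (hπ1 : ∀ s, ∑ a, π s a = 1)
    (hπ'0 : ∀ s a, 0 ≤ π' s a) (hπ'1 : ∀ s, ∑ a, π' s a = 1)
    (μ : S → ℝ) (hμ0 : ∀ s, 0 ≤ μ s) (hμ1 : ∑ s, μ s = 1)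
    (V V' : S → ℝ)
    (hV : ∀ s, V s = ∑ a, π s a * (R s a + γ * ∑ s', P s a s' * V s'))
    (hV' : ∀ s, V' s = ∑ a, π' s a * (R s a + γ * ∑ s', P s a s' * V' s'))
    (Q : S → A → ℝ) (hQ : ∀ s a, Q s a = R s a + γ * ∑ s', P s a s' * V s')
    (Adv : S → A → ℝ) (hAdv : ∀ s a, Adv s a = Q s a - V s) :
    (∑ s, μ s * V' s) - (∑ s, μ s * V s) =
      (1 / (1 - γ)) *
        ∑ s, occupancy (inducedKernel P π') μ γ s * ∑ a, π' s a * Adv s a :=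
  performance_difference_lemma_general P R γ hγ0 hγ1 hP0 hP1 π' hπ'0 hπ'1 μ V V' hV' Q hQ Adv hAdv
end

section
/- Simulation lemma via policy distance: for two stationary policies π, π' on a finite MDP with rewards in [0,1], ‖V^{π'} − V^{π}‖_∞ ≤ (γ/(1-γ)²) · max_s ∑_a |π'(a|s) − π(a|s)| · (1/2) · 2 + (1/(1-γ)) max_s |∑_a (π'(a|s) − π(a|s)) R̄(s,a)|; more simply, ‖V^{π'} − V^{π}‖_∞ ≤ (1/(1-γ)²) · max_s ∑_a |π'(a|s) − π(a|s)|. -/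
/-!
Subtracting the two Bellman equations gives
`V' - V = (π' - π) Q + γ π' P (V' - V)`, so the sup norm `Δ` of `V' - V` satisfies
`Δ ≤ M + γ Δ`, i.e. `Δ ≤ M / (1 - γ)`, where `M = max_s |∑_a (π' - π) Q|`.
The same contraction argument applied to `V` alone gives `‖V‖_∞ ≤ 1 / (1 - γ)`, hence
`‖Q‖_∞ ≤ 1 / (1 - γ)` and `M ≤ max_s ∑_a |π' - π| / (1 - γ)`.
-/

open Finset

lemma abs_sum_mul_le_of_abs_le {ι : Type*} [Fintype ι] (x : ι → ℝ) {y : ι → ℝ} {B : ℝ}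
    (hy : ∀ i, |y i| ≤ B) : |∑ i, x i * y i| ≤ (∑ i, |x i|) * B :=
  calc |∑ i, x i * y i| ≤ ∑ i, |x i| * |y i| := by
        simpa only [abs_mul] using abs_sum_le_sum_abs (fun i => x i * y i) univ
    _ ≤ ∑ i, |x i| * B := sum_le_sum fun i _ => mul_le_mul_of_nonneg_left (hy i) (abs_nonneg _)
    _ = (∑ i, |x i|) * B := (sum_mul _ _ _).symm

lemma abs_sum_mul_le_of_mem_stdSimplex {ι : Type*} [Fintype ι] {w y : ι → ℝ}
    (hw : w ∈ stdSimplex ℝ ι) {B : ℝ} (hy : ∀ i, |y i| ≤ B) : |∑ i, w i * y i| ≤ B := by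
  have hw_abs : ∑ i, |w i| = 1 := by simp only [abs_of_nonneg (hw.1 _), hw.2]
  simpa only [hw_abs, one_mul] using abs_sum_mul_le_of_abs_le w hy

/-- Evaluating the hypothesis at `B = max_s |f s|` gives `max_s |f s| ≤ c + γ max_s |f s|`. -/
lemma abs_le_div_one_sub_of_contraction {S : Type*} [Finite S] {f : S → ℝ} {c γ : ℝ}
    (hγ1 : γ < 1) (h : ∀ B, (∀ s, |f s| ≤ B) → ∀ s, |f s| ≤ c + γ * B) (s : S) :
    |f s| ≤ c / (1 - γ) := by
  have : Nonempty S := ⟨s⟩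
  obtain ⟨s₀, hs₀⟩ := Finite.exists_max fun s => |f s|
  have hmax : |f s₀| ≤ c + γ * |f s₀| := h _ hs₀ s₀
  rw [le_div_iff₀ (sub_pos.2 hγ1)]
  nlinarith [hs₀ s]

lemma abs_le_of_eq_add_discounted {S A : Type*} [Fintype S] [Fintype A]
    {P : S → A → S → ℝ} (hP : ∀ s a, P s a ∈ stdSimplex ℝ S)
    {w : S → A → ℝ} (hw : ∀ s, w s ∈ stdSimplex ℝ A) {γ c : ℝ} (hγ0 : 0 ≤ γ) (hγ1 : γ < 1)
    {f g : S → ℝ} (hg : ∀ s, |g s| ≤ c)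
    (hf : ∀ s, f s = g s + ∑ a, w s a * (γ * ∑ s', P s a s' * f s')) (s : S) :
    |f s| ≤ c / (1 - γ) := by
  refine abs_le_div_one_sub_of_contraction hγ1 (fun B hB s => ?_) s
  have hstep : |∑ a, w s a * (γ * ∑ s', P s a s' * f s')| ≤ γ * B :=
    abs_sum_mul_le_of_mem_stdSimplex (hw s) fun a => by
      rw [abs_mul, abs_of_nonneg hγ0]
      exact mul_le_mul_of_nonneg_left (abs_sum_mul_le_of_mem_stdSimplex (hP s a) hB) hγ0
  rw [hf s]
  linarith [abs_add_le (g s) (∑ a, w s a * (γ * ∑ s', P s a s' * f s')), hg s]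

lemma value_sub_value_eq {S A : Type*} [Fintype S] [Fintype A]
    {P : S → A → S → ℝ} {R : S → A → ℝ} {γ : ℝ} {π π' : S → A → ℝ} {V V' : S → ℝ}
    {Q : S → A → ℝ} (hV : ∀ s, V s = ∑ a, π s a * (R s a + γ * ∑ s', P s a s' * V s'))
    (hV' : ∀ s, V' s = ∑ a, π' s a * (R s a + γ * ∑ s', P s a s' * V' s'))
    (hQ : ∀ s a, Q s a = R s a + γ * ∑ s', P s a s' * V s') (s : S) :
    V' s - V s = ∑ a, (π' s a - π s a) * Q s a +
      ∑ a, π' s a * (γ * ∑ s', P s a s' * (V' s' - V s')) := by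
  rw [hV' s, hV s, ← sum_sub_distrib, ← sum_add_distrib]
  refine sum_congr rfl fun a _ => ?_
  simp only [hQ, mul_sub, sum_sub_distrib]
  ring

lemma abs_actionValue_le {S A : Type*} [Fintype S] [Fintype A]
    {P : S → A → S → ℝ} (hP : ∀ s a, P s a ∈ stdSimplex ℝ S) {R : S → A → ℝ}
    (hR : ∀ s a, |R s a| ≤ 1) {π : S → A → ℝ} (hπ : ∀ s, π s ∈ stdSimplex ℝ A)
    {γ : ℝ} (hγ0 : 0 ≤ γ) (hγ1 : γ < 1) {V : S → ℝ}
    (hV : ∀ s, V s = ∑ a, π s a * (R s a + γ * ∑ s', P s a s' * V s')) (s : S) (a : A) :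
    |R s a + γ * ∑ s', P s a s' * V s'| ≤ 1 / (1 - γ) := by
  have hV_le : ∀ s, |V s| ≤ 1 / (1 - γ) :=
    abs_le_of_eq_add_discounted hP hπ hγ0 hγ1 (g := fun s => ∑ a, π s a * R s a)
      (fun s => abs_sum_mul_le_of_mem_stdSimplex (hπ s) (hR s))
      (fun s => by simp only [hV s, mul_add, sum_add_distrib])
  have hγV : |γ * ∑ s', P s a s' * V s'| ≤ γ * (1 / (1 - γ)) := by
    rw [abs_mul, abs_of_nonneg hγ0]
    exact mul_le_mul_of_nonneg_left (abs_sum_mul_le_of_mem_stdSimplex (hP s a) hV_le) hγ0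
  calc |R s a + γ * ∑ s', P s a s' * V s'| ≤ 1 + γ * (1 / (1 - γ)) :=
        (abs_add_le _ _).trans (add_le_add (hR s a) hγV)
    _ = 1 / (1 - γ) := by field_simp [(sub_pos.2 hγ1).ne']; ring

theorem simulation_lemma_policy_distance_general
    {S A : Type*} [Fintype S] [Fintype A] [Nonempty S]
    (P : S → A → S → ℝ) (R : S → A → ℝ) (γ : ℝ)
    (hγ0 : 0 ≤ γ) (hγ1 : γ < 1)
    (hP0 : ∀ s a s', 0 ≤ P s a s') (hP1 : ∀ s a, ∑ s', P s a s' = 1)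
    (hR0 : ∀ s a, 0 ≤ R s a) (hR1 : ∀ s a, R s a ≤ 1)
    (π : S → A → ℝ) (hπ0 : ∀ s a, 0 ≤ π s a) (hπ1 : ∀ s, ∑ a, π s a = 1)
    (π' : S → A → ℝ) (hπ'0 : ∀ s a, 0 ≤ π' s a) (hπ'1 : ∀ s, ∑ a, π' s a = 1)
    (V V' : S → ℝ)
    (hV : ∀ s, V s = ∑ a, π s a * (R s a + γ * ∑ s', P s a s' * V s'))
    (hV' : ∀ s, V' s = ∑ a, π' s a * (R s a + γ * ∑ s', P s a s' * V' s'))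
    (Q : S → A → ℝ) (hQ : ∀ s a, Q s a = R s a + γ * ∑ s', P s a s' * V s') :
    (∀ s, |V' s - V s| ≤
      γ / (1 - γ) ^ 2 *
          (Finset.univ.sup' Finset.univ_nonempty fun s => ∑ a, |π' s a - π s a|) * (1 / 2) * 2 +
        1 / (1 - γ) *
          (Finset.univ.sup' Finset.univ_nonempty fun s => |∑ a, (π' s a - π s a) * Q s a|)) ∧
    (∀ s, |V' s - V s| ≤
      1 / (1 - γ) ^ 2 *
        (Finset.univ.sup' Finset.univ_nonempty fun s => ∑ a, |π' s a - π s a|)) := by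
  set D := univ.sup' univ_nonempty fun s => ∑ a, |π' s a - π s a|
  set M := univ.sup' univ_nonempty fun s => |∑ a, (π' s a - π s a) * Q s a|
  have hP : ∀ s a, P s a ∈ stdSimplex ℝ S := fun s a => ⟨hP0 s a, hP1 s a⟩
  have hR : ∀ s a, |R s a| ≤ 1 := fun s a => abs_le.2 ⟨by linarith [hR0 s a], hR1 s a⟩
  have hQ_le : ∀ s a, |Q s a| ≤ 1 / (1 - γ) := fun s a =>
    hQ s a ▸ abs_actionValue_le hP hR (fun s => ⟨hπ0 s, hπ1 s⟩) hγ0 hγ1 hV s a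
  have hM_le : M ≤ D * (1 / (1 - γ)) := sup'_le _ _ fun s _ =>
    (abs_sum_mul_le_of_abs_le _ (hQ_le s)).trans <| mul_le_mul_of_nonneg_right
      (le_sup' (fun s => ∑ a, |π' s a - π s a|) (mem_univ s)) (by positivity)
  have hdiff : ∀ s, |V' s - V s| ≤ M / (1 - γ) :=
    abs_le_of_eq_add_discounted hP (fun s => ⟨hπ'0 s, hπ'1 s⟩) hγ0 hγ1
      (fun s => le_sup' (fun s => |∑ a, (π' s a - π s a) * Q s a|) (mem_univ s))
      (value_sub_value_eq hV hV' hQ)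
  have hD0 : 0 ≤ D := (sum_nonneg fun a _ => abs_nonneg _).trans
    (le_sup' (fun s => ∑ a, |π' s a - π s a|) (mem_univ (Classical.arbitrary S)))
  refine ⟨fun s => ?_, fun s => (hdiff s).trans ?_⟩
  · have : 0 ≤ γ / (1 - γ) ^ 2 * D * (1 / 2) * 2 := by positivity
    rw [one_div_mul_eq_div]
    linarith [hdiff s]
  · calc M / (1 - γ) ≤ D * (1 / (1 - γ)) / (1 - γ) := by gcongr
      _ = 1 / (1 - γ) ^ 2 * D := by field_simp

/-- Simulation lemma via policy distance, for rewards in [0,1]: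
‖V^{π'} − V^{π}‖_∞ ≤ (γ/(1-γ)²)·max_s ∑_a |π'−π|·(1/2)·2 + (1/(1-γ))·max_s |∑_a (π'−π) Q^π|,
and more simply ‖V^{π'} − V^{π}‖_∞ ≤ (1/(1-γ)²)·max_s ∑_a |π'(a|s) − π(a|s)|. -/
theorem simulation_lemma_policy_distance
    {S A : Type*} [Fintype S] [Fintype A] [Nonempty S] [Nonempty A]
    (P : S → A → S → ℝ) (R : S → A → ℝ) (γ : ℝ)
    (hγ0 : 0 ≤ γ) (hγ1 : γ < 1)
    (hP0 : ∀ s a s', 0 ≤ P s a s') (hP1 : ∀ s a, ∑ s', P s a s' = 1)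
    (hR0 : ∀ s a, 0 ≤ R s a) (hR1 : ∀ s a, R s a ≤ 1)
    (π : S → A → ℝ) (hπ0 : ∀ s a, 0 ≤ π s a) (hπ1 : ∀ s, ∑ a, π s a = 1)
    (π' : S → A → ℝ) (hπ'0 : ∀ s a, 0 ≤ π' s a) (hπ'1 : ∀ s, ∑ a, π' s a = 1)
    (V V' : S → ℝ)
    (hV : ∀ s, V s = ∑ a, π s a * (R s a + γ * ∑ s', P s a s' * V s'))
    (hV' : ∀ s, V' s = ∑ a, π' s a * (R s a + γ * ∑ s', P s a s' * V' s'))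
    (Q : S → A → ℝ) (hQ : ∀ s a, Q s a = R s a + γ * ∑ s', P s a s' * V s') :
    (∀ s, |V' s - V s| ≤
      γ / (1 - γ) ^ 2 *
          (Finset.univ.sup' Finset.univ_nonempty fun s => ∑ a, |π' s a - π s a|) * (1 / 2) * 2 +
        1 / (1 - γ) *
          (Finset.univ.sup' Finset.univ_nonempty fun s => |∑ a, (π' s a - π s a) * Q s a|)) ∧
    (∀ s, |V' s - V s| ≤
      1 / (1 - γ) ^ 2 *
        (Finset.univ.sup' Finset.univ_nonempty fun s => ∑ a, |π' s a - π s a|)) :=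
  simulation_lemma_policy_distance_general P R γ hγ0 hγ1 hP0 hP1 hR0 hR1 π hπ0 hπ1 π' hπ'0 hπ'1 V V'
    hV hV' Q hQ
end
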